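/- In the linear case F̃(τ, η) = τ, if the limiting system admits a solution (μ̃^o, μ̃^i, ξ̃) with ∫_{∂ω^i} μ̃^i dσ = ∫_{∂Ω^o} g^o dσ, then integrating the second equation yields the closed formula ξ̃ = (1/|∂ω^i|₁) [ (1 − |∂ω^i|₁ l₀/(2π)) ∫_{∂Ω^o} g^o dσ − r₀ ∫_{∂ω^i} g^i dσ ], where |∂ω^i|₁ is the arclength of ∂ω^i. -/

import Mathlib

open Real MeasureTheory
open scoped MeasureTheory

noncomputable def S₂ (x : EuclideanSpace ℝ (Fin 2)) : ℝ := (1 / (2 * Real.pi)) * Real.log ‖x‖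

theorem setIntegral_eq_of_half_add_eq {α : Type*} [MeasurableSpace α] {μ : Measure α} {s : Set α}
    (hs : MeasurableSet s) (hμs : μ s ≠ ⊤) {m K g : α → ℝ} {c r : ℝ}
    (hm : IntegrableOn m s μ) (hK : IntegrableOn K s μ) (hg : IntegrableOn g s μ)
    (heq : ∀ t ∈ s, (1 / 2) * m t + K t = c + g t * r)
    (hK_half : ∫ t in s, K t ∂μ = (1 / 2) * ∫ t in s, m t ∂μ) :
    ∫ t in s, m t ∂μ = μ.real s * c + r * ∫ t in s, g t ∂μ := by
  have hintegrated : ∫ t in s, ((1 / 2) * m t + K t) ∂μ = ∫ t in s, (c + g t * r) ∂μ :=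
    setIntegral_congr_fun hs heq
  rw [integral_add (hm.const_mul _) hK, integral_const_mul, hK_half,
    integral_add (integrableOn_const hμs (C := c)) (hg.mul_const _), integral_mul_const,
    setIntegral_const, smul_eq_mul] at hintegrated
  linarith

theorem stmt_13_general (Ωo ωi : Set (EuclideanSpace ℝ (Fin 2)))
    (νi : EuclideanSpace ℝ (Fin 2) → EuclideanSpace ℝ (Fin 2))
    (go gi μi : EuclideanSpace ℝ (Fin 2) → ℝ) (ξ l₀ r₀ : ℝ)
    -- the arclength |∂ω^i|₁ is finite and nonzero :
    (hfin : μH[1] (frontier ωi) ≠ ⊤) (hpos : (μH[1] (frontier ωi)).toReal ≠ 0)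
    -- ∫_{∂ω^i} μ̃^i dσ = ∫_{∂Ω^o} g^o dσ :
    (hmean : ∫ s in frontier ωi, μi s ∂μH[1] = ∫ x in frontier Ωo, go x ∂μH[1])
    -- the linear limiting equation on ∂ω^i :
    (heq2 : ∀ t ∈ frontier ωi,
      (1/2) * μi t
        + (∫ s in frontier ωi, (inner ℝ (νi t) (gradient S₂ (t - s)) : ℝ) * μi s ∂μH[1])
        = (l₀ / (2 * Real.pi)) * (∫ s in frontier ωi, μi s ∂μH[1]) + ξ + gi t * r₀)
    -- classical identity on ∂ω^i :
    (hid : ∫ t in frontier ωi,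
        (∫ s in frontier ωi, (inner ℝ (νi t) (gradient S₂ (t - s)) : ℝ) * μi s ∂μH[1]) ∂μH[1]
        = (1/2) * ∫ s in frontier ωi, μi s ∂μH[1])
    -- integrability of the terms :
    (hint1 : IntegrableOn μi (frontier ωi) μH[1])
    (hint2 : IntegrableOn
      (fun t => ∫ s in frontier ωi, (inner ℝ (νi t) (gradient S₂ (t - s)) : ℝ) * μi s ∂μH[1])
      (frontier ωi) μH[1])
    (hint3 : IntegrableOn gi (frontier ωi) μH[1]) :
    ξ = (1 / (μH[1] (frontier ωi)).toReal) *
      ((1 - (μH[1] (frontier ωi)).toReal * l₀ / (2 * Real.pi)) *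
          (∫ x in frontier Ωo, go x ∂μH[1])
        - r₀ * ∫ t in frontier ωi, gi t ∂μH[1]) := by
  have hmass := setIntegral_eq_of_half_add_eq isClosed_frontier.measurableSet hfin
    hint1 hint2 hint3 heq2 hid
  rw [Measure.real_def] at hmass
  rw [← hmean]
  field_simp at hmass ⊢
  linarith

/-- in the linear case F̃(τ,η) = τ, integrating the second limiting equation
gives the closed formula for ξ̃ in terms of l₀, r₀ and the data. The classical double-layer
identity on ∂ω^i and the needed integrabilities are recorded as hypotheses. -/
theorem stmt_13 (Ωo ωi : Set (EuclideanSpace ℝ (Fin 2)))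
    (hΩo : IsOpen Ωo) (hΩc : IsConnected Ωo) (hΩb : Bornology.IsBounded Ωo)
    (hωo : IsOpen ωi) (hωc : IsConnected ωi) (hωb : Bornology.IsBounded ωi)
    (h0Ω : (0 : EuclideanSpace ℝ (Fin 2)) ∈ Ωo) (h0ω : (0 : EuclideanSpace ℝ (Fin 2)) ∈ ωi)
    (νi : EuclideanSpace ℝ (Fin 2) → EuclideanSpace ℝ (Fin 2))
    (go gi μi : EuclideanSpace ℝ (Fin 2) → ℝ) (ξ l₀ r₀ : ℝ)
    -- the arclength |∂ω^i|₁ is finite and nonzero :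
    (hfin : μH[1] (frontier ωi) ≠ ⊤) (hpos : (μH[1] (frontier ωi)).toReal ≠ 0)
    -- ∫_{∂ω^i} μ̃^i dσ = ∫_{∂Ω^o} g^o dσ :
    (hmean : ∫ s in frontier ωi, μi s ∂μH[1] = ∫ x in frontier Ωo, go x ∂μH[1])
    -- the linear limiting equation on ∂ω^i :
    (heq2 : ∀ t ∈ frontier ωi,
      (1/2) * μi t
        + (∫ s in frontier ωi, (inner ℝ (νi t) (gradient S₂ (t - s)) : ℝ) * μi s ∂μH[1])
        = (l₀ / (2 * Real.pi)) * (∫ s in frontier ωi, μi s ∂μH[1]) + ξ + gi t * r₀)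
    -- classical identity on ∂ω^i :
    (hid : ∫ t in frontier ωi,
        (∫ s in frontier ωi, (inner ℝ (νi t) (gradient S₂ (t - s)) : ℝ) * μi s ∂μH[1]) ∂μH[1]
        = (1/2) * ∫ s in frontier ωi, μi s ∂μH[1])
    -- integrability of the terms :
    (hint1 : IntegrableOn μi (frontier ωi) μH[1])
    (hint2 : IntegrableOn
      (fun t => ∫ s in frontier ωi, (inner ℝ (νi t) (gradient S₂ (t - s)) : ℝ) * μi s ∂μH[1])
      (frontier ωi) μH[1])
    (hint3 : IntegrableOn gi (frontier ωi) μH[1]) :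
    ξ = (1 / (μH[1] (frontier ωi)).toReal) *
      ((1 - (μH[1] (frontier ωi)).toReal * l₀ / (2 * Real.pi)) *
          (∫ x in frontier Ωo, go x ∂μH[1])
        - r₀ * ∫ t in frontier ωi, gi t ∂μH[1]) :=
  stmt_13_general Ωo ωi νi go gi μi ξ l₀ r₀ hfin hpos hmean heq2 hid hint1 hint2 hint3
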